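/- arXiv:1506.07945 — 4 statements merged into one kernel-verified Lean document; each statement's English description precedes it below -/
import Mathlib

section
/- Let n be a non-negative integer and let s(m) denote the binary sum-of-digits function. Then for all x, y in a commutative ring (e.g. ℚ), (x+y)^{s(n)} = ∑ x^{s(m)} y^{s(n-m)}, where the sum is over all integers m with 0 ≤ m ≤ n such that the pair (m, n-m) is carry-free, i.e. every binary digit of m is less than or equal to the corresponding binary digit of n. -/
open scoped Classical

/-- Binary sum-of-digits function. -/
def sdig (m : ℕ) : ℕ := (Nat.digits 2 m).sum

/-- The `i`-th digit of `m` in base `b`. -/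
def dig (b m i : ℕ) : ℕ := m / b ^ i % b

/-!
Induction on the number of binary digits. Write `n = r + 2q` with `r < 2`. A carry-free
`m = c + 2a` for `n` is a carry-free `a` for `q` together with a digit `c ≤ r`, and
`s(c + 2a) = c + s(a)`, so the sum factors as
`(∑ₐ x^{s(a)} y^{s(q-a)}) · (∑_{c ≤ r} x^c y^{r-c}) = (x+y)^{s(q)} · (x+y)^r`,
the last factor being a binomial expansion with all coefficients `1` because `r ≤ 1`.
-/

open Finset

lemma sdig_add_two_mul {c : ℕ} (hc : c < 2) (a : ℕ) : sdig (c + 2 * a) = c + sdig a := by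
  rcases eq_or_ne c 0 with rfl | hc₀
  · rcases eq_or_ne a 0 with rfl | ha
    · simp [sdig]
    · rw [sdig, Nat.digits_add 2 one_lt_two 0 a hc (Or.inr ha), List.sum_cons, sdig]
  · rw [sdig, Nat.digits_add 2 one_lt_two c a hc (Or.inl hc₀), List.sum_cons, sdig]

lemma dig_two_zero (m : ℕ) : dig 2 m 0 = m % 2 := by
  simp [dig]

lemma dig_two_succ (m i : ℕ) : dig 2 m (i + 1) = dig 2 (m / 2) i := by
  simp [dig, pow_succ, Nat.div_div_eq_div_mul, mul_comm]

lemma forall_dig_two_le_iff (m n : ℕ) :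
    (∀ i, dig 2 m i ≤ dig 2 n i) ↔
      m % 2 ≤ n % 2 ∧ ∀ i, dig 2 (m / 2) i ≤ dig 2 (n / 2) i := by
  constructor
  · intro h
    exact ⟨by simpa only [dig_two_zero] using h 0,
      fun i => by simpa only [dig_two_succ] using h (i + 1)⟩
  · rintro ⟨h₀, h⟩ (_ | i)
    · simpa only [dig_two_zero] using h₀
    · simpa only [dig_two_succ] using h i

noncomputable def carryFreeSummands (n : ℕ) : Finset ℕ :=
  (range (n + 1)).filter (fun m => ∀ i, dig 2 m i ≤ dig 2 n i)

lemma mem_carryFreeSummands {m n : ℕ} :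
    m ∈ carryFreeSummands n ↔ m ≤ n ∧ ∀ i, dig 2 m i ≤ dig 2 n i := by
  simp [carryFreeSummands]

lemma sum_carryFreeSummands_eq_sum_product {M : Type*} [AddCommMonoid M] (n : ℕ) (f : ℕ → M) :
    ∑ m ∈ carryFreeSummands n, f m =
      ∑ p ∈ carryFreeSummands (n / 2) ×ˢ range (n % 2 + 1), f (p.2 + 2 * p.1) := by
  refine sum_nbij' (fun m => (m / 2, m % 2)) (fun p => p.2 + 2 * p.1) ?_ ?_ ?_ ?_ ?_
  · intro m hm
    rw [mem_carryFreeSummands, forall_dig_two_le_iff] at hm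
    rw [mem_product, mem_carryFreeSummands, mem_range]
    exact ⟨⟨Nat.div_le_div_right hm.1, hm.2.2⟩, by omega⟩
  · rintro ⟨a, c⟩ hp
    rw [mem_product, mem_carryFreeSummands, mem_range] at hp
    have hdiv : (c + 2 * a) / 2 = a := by omega
    have hmod : (c + 2 * a) % 2 = c := by omega
    rw [mem_carryFreeSummands, forall_dig_two_le_iff, hdiv, hmod]
    exact ⟨by omega, by omega, hp.1.2⟩
  · intro m _
    exact Nat.mod_add_div m 2
  · rintro ⟨a, c⟩ hp
    rw [mem_product, mem_range] at hp
    simp only [Prod.mk.injEq]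
    omega
  · intro m _
    rw [Nat.mod_add_div]

lemma add_pow_eq_sum_range_of_lt_two {R : Type*} [CommSemiring R] (x y : R) {r : ℕ}
    (hr : r < 2) : (x + y) ^ r = ∑ c ∈ range (r + 1), x ^ c * y ^ (r - c) := by
  interval_cases r <;> simp [sum_range_succ, add_comm]

theorem add_pow_sdig {R : Type*} [CommSemiring R] (x y : R) (n : ℕ) :
    (x + y) ^ sdig n = ∑ m ∈ carryFreeSummands n, x ^ sdig m * y ^ sdig (n - m) := by
  induction n using Nat.strong_induction_on with
  | _ n ih =>
    rcases Nat.eq_zero_or_pos n with rfl | hn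
    · rw [carryFreeSummands, range_one, filter_singleton, if_pos fun _ => le_rfl]
      simp [sdig]
    set q := n / 2
    set r := n % 2
    have hr : r < 2 := Nat.mod_lt n two_pos
    have summand : ∀ a ∈ carryFreeSummands q, ∀ c ∈ range (r + 1),
        x ^ sdig (c + 2 * a) * y ^ sdig (n - (c + 2 * a)) =
          x ^ sdig a * y ^ sdig (q - a) * (x ^ c * y ^ (r - c)) := by
      intro a ha c hc
      rw [mem_carryFreeSummands] at ha
      rw [mem_range] at hc
      have hsub : n - (c + 2 * a) = (r - c) + 2 * (q - a) := by omega
      rw [hsub, sdig_add_two_mul (by omega), sdig_add_two_mul (by omega), pow_add, pow_add]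
      ring
    calc (x + y) ^ sdig n = (x + y) ^ sdig (r + 2 * q) := by rw [Nat.mod_add_div n 2]
      _ = (∑ a ∈ carryFreeSummands q, x ^ sdig a * y ^ sdig (q - a)) *
            ∑ c ∈ range (r + 1), x ^ c * y ^ (r - c) := by
        rw [sdig_add_two_mul hr, pow_add, add_pow_eq_sum_range_of_lt_two x y hr,
          ih q (Nat.div_lt_self hn one_lt_two), mul_comm]
      _ = ∑ p ∈ carryFreeSummands q ×ˢ range (r + 1),
            x ^ sdig (p.2 + 2 * p.1) * y ^ sdig (n - (p.2 + 2 * p.1)) := by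
        rw [sum_mul_sum, sum_product]
        exact sum_congr rfl fun a ha => sum_congr rfl fun c hc => (summand a ha c hc).symm
      _ = ∑ m ∈ carryFreeSummands n, x ^ sdig m * y ^ sdig (n - m) :=
        (sum_carryFreeSummands_eq_sum_product n fun m => x ^ sdig m * y ^ sdig (n - m)).symm

/-- **Digital binomial theorem.** -/
theorem digital_binomial_theorem (n : ℕ) (x y : ℚ) :
    (x + y) ^ sdig n =
      ∑ m ∈ (Finset.range (n + 1)).filter (fun m => ∀ i, dig 2 m i ≤ dig 2 n i),
        x ^ sdig m * y ^ sdig (n - m) :=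
  add_pow_sdig x y n
end

section
/- Let n be a non-negative integer with binary expansion n = n_{N-1}·2^{N-1} + ⋯ + n_0·2^0 (each n_i ∈ {0,1}). Then for all x, y, q in ℚ (or any commutative ring), ∏_{i=0}^{N-1} C(x + q^i·y + n_i - 1, n_i) = ∑ q^{z_n(m)} x^{s(m)} y^{s(n-m)}, where the sum is over all 0 ≤ m ≤ n with (m, n-m) carry-free, C(t, 0) = 1 and C(t, 1) = t denote the generalized binomial coefficients in the ring, and m has binary digits m_i. -/
open scoped Classical

/-- `z_n(m) = ∑_{k=0}^{N-1} k·(1 - δ(n_k, m_k))`, the weighted count of positions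
among the `N` lowest binary digits at which `m` and `n` differ. -/
def zfun (N n m : ℕ) : ℕ :=
  ∑ k ∈ Finset.range N, k * (1 - if dig 2 n k = dig 2 m k then 1 else 0)

/-- The generalized binomial coefficient `C(t, d) = t(t-1)⋯(t-d+1)/d!`. -/
def genChoose (t : ℚ) (d : ℕ) : ℚ :=
  (∏ i ∈ Finset.range d, (t - i)) / (Nat.factorial d)

/-!
Only the positions `i` with `n_i = 1` contribute a factor, namely `x + q^i y`, so the left side
is `∏_{i ∈ S} (x + q^i y)` with `S` the set of binary positions of `n`. Expanding this product,
the subset `t ⊆ S` contributes `q^{∑_{i ∈ S \ t} i} x^{|t|} y^{|S \ t|}`, and `t ↦ ∑_{i ∈ t} 2^i`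
is a bijection onto the `m` with `m ⪯₂ n`, under which `n - m` has binary positions `S \ t`.
-/

open Finset

lemma dig_two_eq_ite_mem_bitIndices (m i : ℕ) :
    dig 2 m i = if i ∈ m.bitIndices.toFinset then 1 else 0 := by
  rw [dig]
  rcases Nat.mod_two_eq_zero_or_one (m / 2 ^ i) with h | h <;>
    simp [h, Nat.testBit_eq_decide_div_mod_eq]

lemma sdig_eq_card_bitIndices (n : ℕ) : sdig n = n.bitIndices.toFinset.card := by
  rw [List.toFinset_card_of_nodup Nat.bitIndices_nodup]
  induction n using Nat.strong_induction_on with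
  | _ n ih =>
    rcases Nat.eq_zero_or_pos n with rfl | hpos
    · simp [sdig]
    rw [sdig, Nat.digits_def' one_lt_two hpos, List.sum_cons, ← sdig]
    obtain ⟨k, rfl | rfl⟩ := Nat.even_or_odd' n
    · rw [Nat.bitIndices_two_mul, List.length_map, ← ih k (by omega),
        show 2 * k / 2 = k by omega]
      omega
    · rw [Nat.bitIndices_two_mul_add_one, List.length_cons, List.length_map, ← ih k (by omega),
        show (2 * k + 1) / 2 = k by omega]
      omega

lemma bitIndices_toFinset_subset_range {N n : ℕ} (hn : n < 2 ^ N) :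
    n.bitIndices.toFinset ⊆ range N := fun i hi =>
  mem_range.2 <| (Nat.pow_lt_pow_iff_right (by norm_num : 1 < 2)).1 <|
    (Nat.ge_two_pow_of_testBit (by simpa using hi)).trans_lt hn

lemma forall_dig_two_le_iff_subset {m n : ℕ} :
    (∀ i, dig 2 m i ≤ dig 2 n i) ↔ m.bitIndices.toFinset ⊆ n.bitIndices.toFinset := by
  simp only [dig_two_eq_ite_mem_bitIndices]
  refine ⟨fun h i hi => ?_, fun h i => ?_⟩
  · by_contra hn
    simpa [hi, hn] using h i
  · by_cases hm : i ∈ m.bitIndices.toFinset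
    · simp [hm, h hm]
    · simp [hm]

lemma sum_two_pow_sdiff_bitIndices_add {m n : ℕ}
    (h : m.bitIndices.toFinset ⊆ n.bitIndices.toFinset) :
    ∑ i ∈ n.bitIndices.toFinset \ m.bitIndices.toFinset, 2 ^ i + m = n := by
  have := sum_sdiff h (f := (2 ^ ·))
  rwa [sum_toFinset_bitIndices_two_pow, sum_toFinset_bitIndices_two_pow] at this

lemma bitIndices_toFinset_sub {m n : ℕ} (h : m.bitIndices.toFinset ⊆ n.bitIndices.toFinset) :
    (n - m).bitIndices.toFinset = n.bitIndices.toFinset \ m.bitIndices.toFinset := by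
  have := sum_two_pow_sdiff_bitIndices_add h
  rw [show n - m = ∑ i ∈ n.bitIndices.toFinset \ m.bitIndices.toFinset, 2 ^ i by omega,
    toFinset_bitIndices_sum_two_pow]

lemma zfun_eq_sum_sdiff {N m n : ℕ} (hn : n < 2 ^ N)
    (h : m.bitIndices.toFinset ⊆ n.bitIndices.toFinset) :
    zfun N n m = ∑ i ∈ n.bitIndices.toFinset \ m.bitIndices.toFinset, i := by
  have hterm : ∀ k, k * (1 - if dig 2 n k = dig 2 m k then 1 else 0) =
      if k ∈ n.bitIndices.toFinset \ m.bitIndices.toFinset then k else 0 := by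
    intro k
    simp only [dig_two_eq_ite_mem_bitIndices, mem_sdiff]
    by_cases hkm : k ∈ m.bitIndices.toFinset
    · simp [hkm, h hkm]
    · by_cases hkn : k ∈ n.bitIndices.toFinset <;> simp [hkm, hkn]
  rw [zfun, sum_congr rfl fun k _ => hterm k, sum_ite_mem,
    inter_eq_right.2 (sdiff_subset.trans (bitIndices_toFinset_subset_range hn))]

theorem prod_add_pow_mul_eq_sum_powerset {R : Type*} [CommSemiring R] (s : Finset ℕ) (x y q : R) :
    ∏ i ∈ s, (x + q ^ i * y) =
      ∑ t ∈ s.powerset, q ^ (∑ i ∈ s \ t, i) * x ^ t.card * y ^ (s \ t).card := by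
  rw [prod_add]
  refine sum_congr rfl fun t _ => ?_
  rw [prod_const, prod_mul_distrib, prod_const, prod_pow_eq_pow_sum]
  ring

lemma genChoose_add_sub_one_of_le_one (t : ℚ) {d : ℕ} (hd : d ≤ 1) :
    genChoose (t + d - 1) d = t ^ d := by
  interval_cases d <;> simp [genChoose]

lemma prod_genChoose_dig_two_eq_prod_bitIndices (N n : ℕ) (hn : n < 2 ^ N) (x y q : ℚ) :
    ∏ i ∈ range N, genChoose (x + q ^ i * y + (dig 2 n i : ℚ) - 1) (dig 2 n i) =
      ∏ i ∈ n.bitIndices.toFinset, (x + q ^ i * y) := by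
  have hdig : ∀ i, dig 2 n i ≤ 1 := fun i => by
    rw [dig_two_eq_ite_mem_bitIndices]; split_ifs <;> simp
  rw [prod_congr rfl fun i _ => genChoose_add_sub_one_of_le_one _ (hdig i)]
  simp only [dig_two_eq_ite_mem_bitIndices, pow_ite, pow_one, pow_zero]
  rw [prod_ite_mem, inter_eq_right.2 (bitIndices_toFinset_subset_range hn)]

/-- **q-digital binomial theorem.** -/
theorem q_digital_binomial_theorem (N n : ℕ) (hn : n < 2 ^ N) (x y q : ℚ) :
    (∏ i ∈ Finset.range N, genChoose (x + q ^ i * y + (dig 2 n i : ℚ) - 1) (dig 2 n i)) =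
      ∑ m ∈ (Finset.range (n + 1)).filter (fun m => ∀ i, dig 2 m i ≤ dig 2 n i),
        q ^ zfun N n m * x ^ sdig m * y ^ sdig (n - m) := by
  rw [prod_genChoose_dig_two_eq_prod_bitIndices N n hn, prod_add_pow_mul_eq_sum_powerset]
  refine (sum_equiv equivBitIndices (fun m => ?_) fun m hm => ?_).symm
  · simp only [mem_filter, mem_range, forall_dig_two_le_iff_subset, equivBitIndices_apply,
      mem_powerset, and_iff_right_iff_imp]
    intro h
    have := sum_two_pow_sdiff_bitIndices_add h
    omega
  · rw [mem_filter, forall_dig_two_le_iff_subset] at hm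
    rw [equivBitIndices_apply, zfun_eq_sum_sdiff hn hm.2, sdig_eq_card_bitIndices,
      sdig_eq_card_bitIndices, bitIndices_toFinset_sub hm.2]
end

section
/- Let N be a positive integer and n = 2^N - 1. Then for all x, y, q in ℚ (or any commutative ring), (x+y)(x+qy)⋯(x+q^{N-1}y) = ∑_{m=0}^{n} q^{z_n(m)} x^{s(m)} y^{s(n-m)}. -/
namespace Nat

theorem digits_sum_add_base_pow_mul {b k n : ℕ} (hb : 1 < b) (hn : n < b ^ k) (m : ℕ) :
    (b.digits (n + b ^ k * m)).sum = (b.digits n).sum + (b.digits m).sum := by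
  rcases Nat.eq_zero_or_pos m with rfl | hm
  · simp
  have hlen : (b.digits n).length ≤ k := (digits_length_le_iff hb n).mpr hn
  rw [← Nat.add_sub_cancel' hlen, ← digits_append_zeroes_append_digits hb hm]
  simp

end Nat

theorem dig_two_eq_toNat_testBit (m k : ℕ) : dig 2 m k = (m.testBit k).toNat :=
  (Nat.toNat_testBit m k).symm

theorem sdig_two_pow_add {N i : ℕ} (hi : i < 2 ^ N) : sdig (2 ^ N + i) = sdig i + 1 := by
  simpa [sdig, add_comm] using Nat.digits_sum_add_base_pow_mul one_lt_two hi 1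

theorem zfun_two_pow_sub_one (N m : ℕ) :
    zfun N (2 ^ N - 1) m = ∑ k ∈ Finset.range N, if m.testBit k then 0 else k := by
  refine Finset.sum_congr rfl fun k hk => ?_
  rw [dig_two_eq_toNat_testBit, dig_two_eq_toNat_testBit, Nat.testBit_two_pow_sub_one,
    decide_eq_true (Finset.mem_range.mp hk)]
  cases m.testBit k <;> simp

theorem zfun_succ_two_pow_add {N i : ℕ} (hi : i < 2 ^ N) :
    zfun (N + 1) (2 ^ (N + 1) - 1) (2 ^ N + i) = zfun N (2 ^ N - 1) i := by
  rw [zfun_two_pow_sub_one, zfun_two_pow_sub_one, Finset.sum_range_succ,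
    Nat.testBit_two_pow_add_eq, Nat.testBit_lt_two_pow hi, Bool.not_false, if_pos rfl, add_zero]
  refine Finset.sum_congr rfl fun k hk => ?_
  rw [Nat.testBit_two_pow_add_gt (Finset.mem_range.mp hk)]

theorem zfun_succ_of_lt {N i : ℕ} (hi : i < 2 ^ N) :
    zfun (N + 1) (2 ^ (N + 1) - 1) i = zfun N (2 ^ N - 1) i + N := by
  rw [zfun_two_pow_sub_one, zfun_two_pow_sub_one, Finset.sum_range_succ,
    Nat.testBit_lt_two_pow hi, if_neg Bool.false_ne_true]

section QDigitalBinomial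

variable {R : Type*} [CommSemiring R] (x y q : R)

def qDigitalTerm (N m : ℕ) : R :=
  q ^ zfun N (2 ^ N - 1) m * x ^ sdig m * y ^ sdig (2 ^ N - 1 - m)

theorem qDigitalTerm_succ_two_pow_add {N i : ℕ} (hi : i < 2 ^ N) :
    qDigitalTerm x y q (N + 1) (2 ^ N + i) = x * qDigitalTerm x y q N i := by
  have hcompl : 2 ^ (N + 1) - 1 - (2 ^ N + i) = 2 ^ N - 1 - i := by omega
  rw [qDigitalTerm, qDigitalTerm, zfun_succ_two_pow_add hi, sdig_two_pow_add hi, hcompl]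
  ring

theorem qDigitalTerm_succ_of_lt {N i : ℕ} (hi : i < 2 ^ N) :
    qDigitalTerm x y q (N + 1) i = q ^ N * y * qDigitalTerm x y q N i := by
  have hcompl : 2 ^ (N + 1) - 1 - i = 2 ^ N + (2 ^ N - 1 - i) := by omega
  rw [qDigitalTerm, qDigitalTerm, zfun_succ_of_lt hi, hcompl,
    sdig_two_pow_add (by omega : 2 ^ N - 1 - i < 2 ^ N)]
  ring

theorem prod_range_add_pow_mul_eq_sum_qDigitalTerm (N : ℕ) :
    ∏ i ∈ Finset.range N, (x + q ^ i * y) =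
      ∑ m ∈ Finset.range (2 ^ N), qDigitalTerm x y q N m := by
  induction N with
  | zero => simp [qDigitalTerm, zfun, sdig]
  | succ N ih =>
    have hhigh : ∀ i ∈ Finset.range (2 ^ N),
        qDigitalTerm x y q (N + 1) (2 ^ N + i) = x * qDigitalTerm x y q N i :=
      fun i hi => qDigitalTerm_succ_two_pow_add x y q (Finset.mem_range.mp hi)
    have hlow : ∀ i ∈ Finset.range (2 ^ N),
        qDigitalTerm x y q (N + 1) i = q ^ N * y * qDigitalTerm x y q N i :=
      fun i hi => qDigitalTerm_succ_of_lt x y q (Finset.mem_range.mp hi)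
    rw [Finset.prod_range_succ, ih, pow_succ, mul_two, Finset.sum_range_add,
      Finset.sum_congr rfl hlow, Finset.sum_congr rfl hhigh, ← Finset.mul_sum, ← Finset.mul_sum]
    ring

end QDigitalBinomial

theorem q_digital_binomial_special_general (N : ℕ) (n : ℕ) (hn : n = 2 ^ N - 1)
    (x y q : ℚ) :
    (∏ i ∈ Finset.range N, (x + q ^ i * y)) =
      ∑ m ∈ Finset.range (n + 1), q ^ zfun N n m * x ^ sdig m * y ^ sdig (n - m) := by
  subst hn
  rw [Nat.sub_add_cancel Nat.one_le_two_pow]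
  exact prod_range_add_pow_mul_eq_sum_qDigitalTerm x y q N

/-- The special case `n = 2^N - 1` of the q-digital binomial theorem:
`(x+y)(x+qy)⋯(x+q^{N-1}y) = ∑_{m=0}^{n} q^{z_n(m)} x^{s(m)} y^{s(n-m)}`. -/
theorem q_digital_binomial_special (N : ℕ) (hN : 0 < N) (n : ℕ) (hn : n = 2 ^ N - 1)
    (x y q : ℚ) :
    (∏ i ∈ Finset.range N, (x + q ^ i * y)) =
      ∑ m ∈ Finset.range (n + 1), q ^ zfun N n m * x ^ sdig m * y ^ sdig (n - m) :=
  q_digital_binomial_special_general N n hn x y q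
end

section
/- Let b ≥ 2 be an integer and n a non-negative integer with base-b expansion n = n_{N-1}·b^{N-1} + ⋯ + n_0·b^0. Then for all x, y, p, q, r in ℚ (or any commutative ℚ-algebra), ∏_{i=0}^{N-1} B(p^i·x + q^i·y; r; n_i) = ∑_{0 ≤ m ⪯_b n} ( ∏_{i=0}^{N-1} B(p^i·x; r; m_i) · ∏_{i=0}^{N-1} B(q^i·y; r; n_i - m_i) ), where m has base-b digits m_i. -/
/-!
Each factor on the left expands by the Chu–Vandermonde identity
`B(x + y; r; d) = ∑_{k + l = d} B(x; r; k) B(y; r; l)`, which follows from the recursion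
`(d + 1) B(x; r; d + 1) = B(x; r; d) (x + d r)`. Multiplying out the product over the digits
`i < N` yields a sum over digit tuples `(m_i)` with `m_i ≤ n_i`, and these are exactly the base-`b`
digit strings of the integers `m ⪯_b n` because `n < b ^ N`; the bijection is built one digit at a
time via `m = j + b m'`.
-/

open scoped Classical

/-- The generalized binomial coefficient `B(x; r; d) = x(x+r)(x+2r)⋯(x+(d-1)r)/d!`. -/
def genBinom (x r : ℚ) (d : ℕ) : ℚ :=
  (∏ i ∈ Finset.range d, (x + i * r)) / (Nat.factorial d)

open Finset

theorem succ_mul_genBinom_succ (x r : ℚ) (d : ℕ) :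
    (d + 1 : ℚ) * genBinom x r (d + 1) = genBinom x r d * (x + d * r) := by
  simp only [genBinom, prod_range_succ, Nat.factorial_succ, Nat.cast_mul, Nat.cast_succ]
  generalize ∏ i ∈ range d, (x + i * r) = P
  field_simp

theorem genBinom_add (x y r : ℚ) (d : ℕ) :
    genBinom (x + y) r d = ∑ ij ∈ antidiagonal d, genBinom x r ij.1 * genBinom y r ij.2 := by
  induction d with
  | zero => simp [genBinom]
  | succ d ih =>
    refine mul_left_cancel₀ (d.cast_add_one_ne_zero (R := ℚ)) ?_
    calc (d + 1 : ℚ) * genBinom (x + y) r (d + 1)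
        = ∑ ij ∈ antidiagonal d, genBinom x r ij.1 * genBinom y r ij.2 *
            ((x + ij.1 * r) + (y + ij.2 * r)) := by
          rw [succ_mul_genBinom_succ, ih, sum_mul]
          refine sum_congr rfl fun ij hij => ?_
          rw [← mem_antidiagonal.mp hij]
          push_cast
          ring
      _ = ∑ ij ∈ antidiagonal d, (ij.1 + 1 : ℚ) * genBinom x r (ij.1 + 1) * genBinom y r ij.2 +
          ∑ ij ∈ antidiagonal d, (ij.2 + 1 : ℚ) * genBinom x r ij.1 * genBinom y r (ij.2 + 1) := by
          rw [← sum_add_distrib]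
          refine sum_congr rfl fun ij _ => ?_
          linear_combination -genBinom y r ij.2 * succ_mul_genBinom_succ x r ij.1 -
            genBinom x r ij.1 * succ_mul_genBinom_succ y r ij.2
      _ = ∑ ij ∈ antidiagonal (d + 1),
            (ij.1 + ij.2 : ℚ) * genBinom x r ij.1 * genBinom y r ij.2 := by
          simp only [add_mul, sum_add_distrib]
          rw [Nat.sum_antidiagonal_succ, Nat.sum_antidiagonal_succ']
          simp [add_mul, sum_add_distrib]
      _ = (d + 1 : ℚ) * ∑ ij ∈ antidiagonal (d + 1), genBinom x r ij.1 * genBinom y r ij.2 := by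
          rw [mul_sum]
          refine sum_congr rfl fun ij hij => ?_
          rw [← Nat.cast_add, mem_antidiagonal.mp hij]
          push_cast
          ring

theorem dig_zero (b m : ℕ) : dig b m 0 = m % b := by
  simp [dig]

theorem dig_succ (b m i : ℕ) : dig b m (i + 1) = dig b (m / b) i := by
  simp [dig, pow_succ', Nat.div_div_eq_div_mul]

theorem Nat.add_mul_mod_eq_of_lt {j b : ℕ} (hj : j < b) (m : ℕ) : (j + b * m) % b = j := by
  rw [Nat.add_mul_mod_self_left, Nat.mod_eq_of_lt hj]

theorem Nat.add_mul_div_eq_of_lt {j b : ℕ} (hj : j < b) (m : ℕ) : (j + b * m) / b = m := by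
  rw [Nat.add_mul_div_left _ _ (j.zero_le.trans_lt hj), Nat.div_eq_of_lt hj, zero_add]

theorem forall_dig_le_iff {b m n : ℕ} :
    (∀ i, dig b m i ≤ dig b n i) ↔ m % b ≤ n % b ∧ ∀ i, dig b (m / b) i ≤ dig b (n / b) i := by
  simp only [← dig_zero, ← dig_succ]
  exact ⟨fun h => ⟨h 0, fun i => h (i + 1)⟩, fun h i => i.casesOn h.1 h.2⟩

theorem le_of_forall_dig_le {b : ℕ} (hb : 2 ≤ b) {m n : ℕ} (h : ∀ i, dig b m i ≤ dig b n i) :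
    m ≤ n := by
  induction m using Nat.strong_induction_on generalizing n with
  | _ m ih =>
    obtain rfl | hm := m.eq_zero_or_pos
    · exact n.zero_le
    rw [forall_dig_le_iff] at h
    have hdiv : m / b ≤ n / b := ih _ (Nat.div_lt_self hm hb) h.2
    rw [← Nat.div_add_mod m b, ← Nat.div_add_mod n b]
    exact Nat.add_le_add (Nat.mul_le_mul_left b hdiv) h.1

/-- The set of `m ⪯_b n`. The bound `m ≤ n` only makes it finite: for `2 ≤ b` it follows from the
digit condition (`mem_digitDominated`). -/
noncomputable def digitDominated (b n : ℕ) : Finset ℕ :=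
  (range (n + 1)).filter fun m => ∀ i, dig b m i ≤ dig b n i

theorem mem_digitDominated {b : ℕ} (hb : 2 ≤ b) {m n : ℕ} :
    m ∈ digitDominated b n ↔ ∀ i, dig b m i ≤ dig b n i := by
  simp only [digitDominated, mem_filter, mem_range, Nat.lt_succ_iff, and_iff_right_iff_imp]
  exact le_of_forall_dig_le hb

theorem lt_of_mem_range_mod_add_one {b n j : ℕ} (hb : 0 < b) (hj : j ∈ range (n % b + 1)) :
    j < b :=
  (Nat.lt_succ_iff.mp (mem_range.mp hj)).trans_lt (Nat.mod_lt n hb)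

theorem sum_digitDominated {M : Type*} [AddCommMonoid M] {b : ℕ} (hb : 2 ≤ b) (n : ℕ)
    (f : ℕ → M) :
    ∑ m ∈ digitDominated b n, f m =
      ∑ j ∈ range (n % b + 1), ∑ m ∈ digitDominated b (n / b), f (j + b * m) := by
  have hlt {j : ℕ} (hj : j ∈ range (n % b + 1)) : j < b :=
    lt_of_mem_range_mod_add_one (by omega) hj
  rw [← sum_product']
  refine sum_nbij' (fun m => (m % b, m / b)) (fun jm => jm.1 + b * jm.2) ?_ ?_ ?_ ?_ ?_
  · intro m hm
    rw [mem_digitDominated hb, forall_dig_le_iff] at hm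
    simp only [mem_product, mem_range, mem_digitDominated hb]
    exact ⟨by omega, hm.2⟩
  · rintro ⟨j, m⟩ hjm
    rw [mem_product] at hjm
    have hj := hlt hjm.1
    rw [mem_digitDominated hb, forall_dig_le_iff, Nat.add_mul_mod_eq_of_lt hj,
      Nat.add_mul_div_eq_of_lt hj, ← mem_digitDominated hb]
    exact ⟨Nat.lt_succ_iff.mp (mem_range.mp hjm.1), hjm.2⟩
  · intro m _
    exact Nat.mod_add_div m b
  · rintro ⟨j, m⟩ hjm
    have hj := hlt (mem_product.mp hjm).1
    rw [Nat.add_mul_mod_eq_of_lt hj, Nat.add_mul_div_eq_of_lt hj]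
  · intro m _
    rw [Nat.mod_add_div]

theorem prod_sum_range_dig_eq_sum_digitDominated {R : Type*} [CommSemiring R] {b : ℕ}
    (hb : 2 ≤ b) {N n : ℕ} (hn : n < b ^ N) (φ : ℕ → ℕ → R) :
    ∏ i ∈ range N, ∑ k ∈ range (dig b n i + 1), φ i k =
      ∑ m ∈ digitDominated b n, ∏ i ∈ range N, φ i (dig b m i) := by
  induction N generalizing n φ with
  | zero =>
    obtain rfl : n = 0 := by simpa using hn
    simp [digitDominated, filter_singleton]
  | succ N ih =>
    have hn' : n / b < b ^ N := Nat.div_lt_of_lt_mul (by rwa [← pow_succ'])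
    calc ∏ i ∈ range (N + 1), ∑ k ∈ range (dig b n i + 1), φ i k
        = (∑ m ∈ digitDominated b (n / b), ∏ i ∈ range N, φ (i + 1) (dig b m i)) *
            ∑ j ∈ range (n % b + 1), φ 0 j := by
          rw [prod_range_succ', ← ih hn', dig_zero]
          simp only [dig_succ]
      _ = ∑ j ∈ range (n % b + 1), ∑ m ∈ digitDominated b (n / b),
            ∏ i ∈ range (N + 1), φ i (dig b (j + b * m) i) := by
          rw [sum_mul_sum, sum_comm]
          refine sum_congr rfl fun j hj => sum_congr rfl fun m _ => ?_
          have hj : j < b := lt_of_mem_range_mod_add_one (by omega) hj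
          rw [prod_range_succ', dig_zero, Nat.add_mul_mod_eq_of_lt hj]
          simp only [dig_succ, Nat.add_mul_div_eq_of_lt hj]
      _ = ∑ m ∈ digitDominated b n, ∏ i ∈ range (N + 1), φ i (dig b m i) :=
          (sum_digitDominated hb n fun m => ∏ i ∈ range (N + 1), φ i (dig b m i)).symm

/-- **Three-parameter digital binomial theorem.** -/
theorem three_parameter_digital_binomial_theorem (b : ℕ) (hb : 2 ≤ b)
    (N n : ℕ) (hn : n < b ^ N) (x y p q r : ℚ) :
    (∏ i ∈ Finset.range N, genBinom (p ^ i * x + q ^ i * y) r (dig b n i)) =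
      ∑ m ∈ (Finset.range (n + 1)).filter (fun m => ∀ i, dig b m i ≤ dig b n i),
        (∏ i ∈ Finset.range N, genBinom (p ^ i * x) r (dig b m i)) *
          ∏ i ∈ Finset.range N, genBinom (q ^ i * y) r (dig b n i - dig b m i) := by
  calc (∏ i ∈ range N, genBinom (p ^ i * x + q ^ i * y) r (dig b n i))
      = ∏ i ∈ range N, ∑ k ∈ range (dig b n i + 1),
          genBinom (p ^ i * x) r k * genBinom (q ^ i * y) r (dig b n i - k) :=
        prod_congr rfl fun i _ => by
          rw [genBinom_add, Nat.sum_antidiagonal_eq_sum_range_succ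
            (fun k l => genBinom (p ^ i * x) r k * genBinom (q ^ i * y) r l)]
    _ = ∑ m ∈ digitDominated b n, ∏ i ∈ range N,
          genBinom (p ^ i * x) r (dig b m i) * genBinom (q ^ i * y) r (dig b n i - dig b m i) :=
        prod_sum_range_dig_eq_sum_digitDominated hb hn _
    _ = _ := sum_congr rfl fun m _ => prod_mul_distrib
end
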